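/- arXiv:1901.06534 — 7 statements merged into one kernel-verified Lean document; each statement's English description precedes it below -/
import Mathlib

section
/- If D is a directed path on an even number n of vertices (arcs (v_i, v_{i+1}) for 1 ≤ i ≤ n−1), then DIN(D) = (n² + 2n)/4. -/
/-- `φ` is a directed intersection representation of the digraph with arc relation `A`. -/
def IsDIRep {V : Type*} (A : V → V → Prop) (φ : V → Finset ℕ) : Prop :=
  (∀ v, (φ v).Nonempty) ∧
  ∀ u v, A u v ↔ ((φ u ∩ φ v).Nonempty ∧ (φ u).card < (φ v).card)

/-- The directed path on `n` vertices (arcs `v_i → v_{i+1}`). -/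
def DirPath (n : ℕ) : Fin n → Fin n → Prop := fun u v => (u : ℕ) + 1 = (v : ℕ)

namespace Stmt5Aux

def B (i : ℕ) : ℕ := (i / 2 + 1) * (i / 2 + 1 + i % 2)
lemma B_zero : B 0 = 1 := rfl
lemma B_succ (i : ℕ) : B (i + 1) = B i + (i + 1) / 2 + 1 := by
  unfold B
  rcases Nat.even_or_odd i with ⟨k, hk⟩ | ⟨k, hk⟩
  · subst hk
    have h1 : (k + k) / 2 = k := by omega
    have h2 : (k + k + 1) / 2 = k := by omega
    have h3 : (k + k) % 2 = 0 := by omega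
    have h4 : (k + k + 1) % 2 = 1 := by omega
    rw [h2, h4, h1, h3]; ring
  · subst hk
    have h1 : (2 * k + 1) / 2 = k := by omega
    have h2 : (2 * k + 1 + 1) / 2 = k + 1 := by omega
    have h3 : (2 * k + 1) % 2 = 1 := by omega
    have h4 : (2 * k + 1 + 1) % 2 = 0 := by omega
    rw [h2, h4, h1, h3]; ring
lemma B_ge (i : ℕ) : i + 1 ≤ B i := by
  induction i with
  | zero => simp [B_zero]
  | succ i ih => have := B_succ i; omega
lemma a_mono (i j : ℕ) (h : i ≤ j) : B i - i ≤ B j - j := by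
  induction j, h using Nat.le_induction with
  | base => exact le_rfl
  | succ j hj ih =>
    have h1 := B_succ j
    have h2 := B_ge j
    omega
lemma a_gap (i j : ℕ) (h : i + 2 ≤ j) : B i + 1 ≤ B j - j := by
  have h1 := a_mono (i + 2) j h
  have h2 := B_succ i
  have h3 := B_succ (i + 1)
  have e : i + 1 + 1 = i + 2 := rfl
  rw [e] at h3
  have h4 := B_ge i
  omega

def ψ (i : ℕ) : Finset ℕ := Finset.Icc (B i - i) (B i)

lemma ψ_card (i : ℕ) : (ψ i).card = i + 1 := by
  have := B_ge i
  rw [ψ, Nat.card_Icc]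
  omega
lemma ψ_nonempty (i : ℕ) : (ψ i).Nonempty :=
  Finset.nonempty_Icc.2 (Nat.sub_le _ _)
lemma union_eq (k : ℕ) :
    (Finset.range (k + 1)).biUnion ψ = Finset.Icc 1 (B k) := by
  induction k with
  | zero =>
    ext x
    simp [ψ, B, Finset.mem_Icc]
  | succ k ih =>
    rw [Finset.range_add_one, Finset.biUnion_insert, ih]
    ext x
    simp only [Finset.mem_union, Finset.mem_Icc, ψ]
    have h1 := B_succ k
    have h2 := B_ge k
    omega

lemma key (ψ : ℕ → Finset ℕ) (k : ℕ) :
    ((Finset.range (k + 1)).biUnion ψ).card + (ψ k ∩ (Finset.range k).biUnion ψ).card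
      = (ψ k).card + ((Finset.range k).biUnion ψ).card := by
  rw [Finset.range_add_one, Finset.biUnion_insert, Finset.card_union_add_card_inter]

lemma hint (ψ : ℕ → Finset ℕ) (k : ℕ) (hk : 1 ≤ k)
    (hd : ∀ i, i + 2 ≤ k → ψ i ∩ ψ k = ∅) :
    (ψ k ∩ (Finset.range k).biUnion ψ).card ≤ (ψ (k - 1) ∩ ψ k).card := by
  apply Finset.card_le_card
  intro x hx
  rw [Finset.mem_inter] at hx
  obtain ⟨hxk, hxU⟩ := hx
  rw [Finset.mem_biUnion] at hxU
  obtain ⟨i, hik, hxi⟩ := hxU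
  rw [Finset.mem_range] at hik
  rcases Nat.lt_or_ge i (k - 1) with hc | hc
  · have h0 := hd i (by omega)
    have hmem : x ∈ ψ i ∩ ψ k := Finset.mem_inter.2 ⟨hxi, hxk⟩
    rw [h0] at hmem
    exact absurd hmem (Finset.notMem_empty x)
  · have hik' : i = k - 1 := by omega
    subst hik'
    exact Finset.mem_inter.2 ⟨hxi, hxk⟩

lemma hTlem (A B C : Finset ℕ) (h : A ∩ C = ∅) :
    (A ∩ B).card + (B ∩ C).card ≤ B.card := by
  have hdisj : Disjoint (A ∩ B) (B ∩ C) := by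
    rw [Finset.disjoint_left]
    intro x h1 h2
    have hm : x ∈ A ∩ C :=
      Finset.mem_inter.2 ⟨(Finset.mem_inter.1 h1).1, (Finset.mem_inter.1 h2).2⟩
    rw [h] at hm
    exact Finset.notMem_empty x hm
  calc (A ∩ B).card + (B ∩ C).card = ((A ∩ B) ∪ (B ∩ C)).card :=
        (Finset.card_union_of_disjoint hdisj).symm
    _ ≤ B.card := by
        apply Finset.card_le_card
        intro x hx
        rcases Finset.mem_union.1 hx with h' | h'
        · exact (Finset.mem_inter.1 h').2
        · exact (Finset.mem_inter.1 h').1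

lemma main_ind (ψ : ℕ → Finset ℕ) (n m : ℕ) (hnm : n = 2 * m)
    (hsize : ∀ i, i < n → i + 1 ≤ (ψ i).card)
    (hdisj : ∀ i j, i + 2 ≤ j → j < n → ψ i ∩ ψ j = ∅) :
    ∀ j, j ≤ m → j * (j + 1) ≤ ((Finset.range (2 * j)).biUnion ψ).card := by
  intro j
  induction j with
  | zero => simp
  | succ j ih =>
    intro hj
    have h2j1 : 2 * j + 1 < n := by omega
    have hgoal : 2 * (j + 1) = (2 * j + 1) + 1 := by ring
    rw [hgoal]
    have k1 := key ψ (2 * j)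
    have k2 := key ψ (2 * j + 1)
    have i2le := hint ψ (2 * j + 1) (by omega) (fun i hi => hdisj i (2 * j + 1) hi h2j1)
    simp only [Nat.add_sub_cancel] at i2le
    have hs1 := hsize (2 * j + 1) h2j1
    rcases Nat.eq_zero_or_pos j with hj0 | hjpos
    · subst hj0
      have hU0 : ((Finset.range (2 * 0)).biUnion ψ).card = 0 := by simp
      have hi0 : (ψ (2 * 0) ∩ (Finset.range (2 * 0)).biUnion ψ).card
          ≤ ((Finset.range (2 * 0)).biUnion ψ).card :=
        Finset.card_le_card (Finset.inter_subset_right)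
      have ht0 : (ψ (2 * 0) ∩ ψ (2 * 0 + 1)).card ≤ (ψ (2 * 0)).card :=
        Finset.card_le_card (Finset.inter_subset_left)
      omega
    · have h2j : 2 * j < n := by omega
      have i1le := hint ψ (2 * j) (by omega) (fun i hi => hdisj i (2 * j) hi h2j)
      have hT := hTlem (ψ (2 * j - 1)) (ψ (2 * j)) (ψ (2 * j + 1))
        (hdisj (2 * j - 1) (2 * j + 1) (by omega) h2j1)
      have ihj := ih (by omega)
      have hmul : (j + 1) * ((j + 1) + 1) = j * (j + 1) + (2 * j + 2) := by ring
      linarith [k1, k2, i1le, i2le, hT, hs1, ihj]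

lemma target_eq (m : ℕ) : ((2 * m) ^ 2 + 2 * (2 * m)) / 4 = m * (m + 1) := by
  have h : (2 * m) ^ 2 + 2 * (2 * m) = (m * (m + 1)) * 4 := by ring
  rw [h, Nat.mul_div_cancel _ (by norm_num)]

end Stmt5Aux

open Stmt5Aux

/-- For a directed path on an even number `n` of vertices, `DIN = (n² + 2n)/4`. -/
theorem stmt_5 (n : ℕ) (hn : Even n) :
    IsLeast {k : ℕ | ∃ φ : Fin n → Finset ℕ, IsDIRep (DirPath n) φ ∧
        (Finset.univ.biUnion φ).card = k}
      ((n ^ 2 + 2 * n) / 4) := by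
  obtain ⟨m, hm⟩ := hn
  have hnm : n = 2 * m := by omega
  subst hnm
  rw [target_eq]
  constructor
  · -- membership: explicit representation
    refine ⟨fun i : Fin (2 * m) => ψ i, ⟨fun v => ψ_nonempty v, ?_⟩, ?_⟩
    · intro u v
      constructor
      · intro h
        have hv : (v : ℕ) = (u : ℕ) + 1 := (h : (u : ℕ) + 1 = v).symm
        constructor
        · refine ⟨B v - v, Finset.mem_inter.2 ⟨?_, ?_⟩⟩
          · simp only [ψ, Finset.mem_Icc]
            have h1 := B_succ (u : ℕ)
            have h2 := B_ge (u : ℕ)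
            rw [hv]
            omega
          · simp only [ψ, Finset.mem_Icc]
            omega
        · rw [ψ_card, ψ_card]
          omega
      · rintro ⟨⟨x, hx⟩, hlt⟩
        rw [ψ_card, ψ_card] at hlt
        show (u : ℕ) + 1 = (v : ℕ)
        by_contra hne
        have hgap : (u : ℕ) + 2 ≤ (v : ℕ) := by omega
        have hg := a_gap (u : ℕ) (v : ℕ) hgap
        simp only [ψ, Finset.mem_inter, Finset.mem_Icc] at hx
        omega
    · -- cardinality of the union
      have huniv : (Finset.univ.biUnion fun i : Fin (2 * m) => ψ (i : ℕ))
          = (Finset.range (2 * m)).biUnion ψ := by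
        ext x
        simp only [Finset.mem_biUnion, Finset.mem_univ, true_and, Finset.mem_range]
        constructor
        · rintro ⟨v, hv⟩; exact ⟨v, v.isLt, hv⟩
        · rintro ⟨i, hi, hx⟩; exact ⟨⟨i, hi⟩, hx⟩
      rcases Nat.eq_zero_or_pos m with hm0 | hmpos
      · subst hm0
        simp [huniv]
      · have hn1 : 2 * m = (2 * m - 1) + 1 := by omega
        rw [huniv, hn1, union_eq, Nat.card_Icc]
        have hB : B (2 * m - 1) = m * (m + 1) := by
          rw [B]
          have h1 : (2 * m - 1) / 2 = m - 1 := by omega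
          have h2 : (2 * m - 1) % 2 = 1 := by omega
          rw [h1, h2]
          have h3 : m - 1 + 1 = m := by omega
          rw [h3]
        omega
  · -- lower bound
    rintro k ⟨φ, ⟨hne, hiff⟩, hk⟩
    subst hk
    set ψ' : ℕ → Finset ℕ := fun i => if h : i < 2 * m then φ ⟨i, h⟩ else ∅ with hψ'
    have hpsi : ∀ i (h : i < 2 * m), ψ' i = φ ⟨i, h⟩ := fun i h => dif_pos h
    have hadj : ∀ i, i + 1 < 2 * m →
        (ψ' i ∩ ψ' (i + 1)).Nonempty ∧ (ψ' i).card < (ψ' (i + 1)).card := by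
      intro i hi
      have harc : DirPath (2 * m) ⟨i, by omega⟩ ⟨i + 1, hi⟩ := rfl
      have h := (hiff ⟨i, by omega⟩ ⟨i + 1, hi⟩).mp harc
      rw [hpsi i (by omega), hpsi (i + 1) hi]
      exact h
    have hsize : ∀ i, i < 2 * m → i + 1 ≤ (ψ' i).card := by
      intro i
      induction i with
      | zero =>
        intro h
        rw [hpsi 0 h]
        exact Finset.card_pos.2 (hne _)
      | succ i ih =>
        intro h
        have h2 := (hadj i h).2
        have h3 := ih (by omega)
        omega
    have hlt : ∀ i j, i < j → j < 2 * m → (ψ' i).card < (ψ' j).card := by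
      intro i j hij
      induction j, hij using Nat.le_induction with
      | base => intro h; exact (hadj i h).2
      | succ j hj ih =>
        intro h
        exact lt_trans (ih (by omega)) (hadj j h).2
    have hdisj : ∀ i j, i + 2 ≤ j → j < 2 * m → ψ' i ∩ ψ' j = ∅ := by
      intro i j hij hjn
      have h1 := hlt i j (by omega) hjn
      have harc : ¬ DirPath (2 * m) ⟨i, by omega⟩ ⟨j, hjn⟩ := by
        intro hc
        have : i + 1 = j := hc
        omega
      rw [hiff] at harc
      rw [hpsi i (by omega), hpsi j hjn] at h1 ⊢
      by_contra h3
      exact harc ⟨Finset.nonempty_iff_ne_empty.2 h3, h1⟩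
    have hmain := main_ind ψ' (2 * m) m rfl hsize hdisj m le_rfl
    have huniv : (Finset.range (2 * m)).biUnion ψ' = Finset.univ.biUnion φ := by
      ext x
      simp only [Finset.mem_biUnion, Finset.mem_univ, true_and, Finset.mem_range]
      constructor
      · rintro ⟨i, hi, hx⟩
        rw [hpsi i hi] at hx
        exact ⟨⟨i, hi⟩, hx⟩
      · rintro ⟨v, hv⟩
        refine ⟨v, v.isLt, ?_⟩
        rw [hpsi v v.isLt]
        convert hv
    rw [huniv] at hmain
    exact hmain
end

section
/- If D is a directed path on an odd number n of vertices, then DIN(D) = (n² + 2n + 1)/4. -/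
namespace DINAux

def f (k : ℕ) : ℕ := k * k / 4

lemma f_even (j : ℕ) : f (2 * j) = j * j := by
  unfold f
  have h : 2 * j * (2 * j) = j * j * 4 := by ring
  rw [h]; omega

lemma f_odd (j : ℕ) : f (2 * j + 1) = j * j + j := by
  unfold f
  have h : (2 * j + 1) * (2 * j + 1) = (j * j + j) * 4 + 1 := by ring
  rw [h]; omega

lemma f_add_two (k : ℕ) : f (k + 2) = f k + (k + 1) := by
  unfold f
  have h : (k + 2) * (k + 2) = k * k + (k + 1) * 4 := by ring
  rw [h]; omega

lemma f_mono : Monotone f := fun _ _ h => Nat.div_le_div_right (Nat.mul_le_mul h h)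

lemma f_lt (k : ℕ) (hk : 1 ≤ k) : f k < f (k + 1) := by
  rcases Nat.even_or_odd k with ⟨j, hj⟩ | ⟨j, hj⟩
  · have hj' : k = 2 * j := by omega
    subst hj'
    rw [f_even, f_odd]
    omega
  · have hj' : k = 2 * j + 1 := by omega
    subst hj'
    have h2 : 2 * j + 1 + 1 = 2 * (j + 1) := by ring
    rw [f_odd, h2, f_even]
    nlinarith

/-- The optimal representation of the directed path. -/
def rep (n : ℕ) : Fin n → Finset ℕ := fun i => Finset.Ico (f i) (f ((i : ℕ) + 2))

lemma rep_card {n : ℕ} (i : Fin n) : (rep n i).card = (i : ℕ) + 1 := by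
  rw [rep, Nat.card_Ico, f_add_two]
  omega

lemma rep_isDIRep (n : ℕ) : IsDIRep (DirPath n) (rep n) := by
  constructor
  · intro v
    rw [← Finset.card_pos, rep_card]
    omega
  · intro u v
    rw [rep_card, rep_card]
    constructor
    · intro h
      have hv : (v : ℕ) = (u : ℕ) + 1 := h.symm
      constructor
      · refine ⟨f ((u : ℕ) + 1), Finset.mem_inter.mpr ⟨?_, ?_⟩⟩
        · rw [rep, Finset.mem_Ico]
          exact ⟨f_mono (by omega), f_lt _ (by omega)⟩
        · rw [rep, Finset.mem_Ico, hv]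
          exact ⟨le_rfl, lt_of_lt_of_le (f_lt _ (by omega)) (f_mono (by omega))⟩
      · omega
    · rintro ⟨⟨x, hx⟩, hcard⟩
      rw [Finset.mem_inter, rep, rep, Finset.mem_Ico, Finset.mem_Ico] at hx
      show (u : ℕ) + 1 = (v : ℕ)
      rcases Nat.lt_or_ge (v : ℕ) ((u : ℕ) + 2) with h | h
      · omega
      · exact absurd (lt_of_le_of_lt hx.2.1 hx.1.2) (not_lt.mpr (f_mono h))

lemma rep_biUnion (n : ℕ) (hn : 1 ≤ n) :
    Finset.univ.biUnion (rep n) = Finset.Ico 0 (f (n + 1)) := by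
  ext x
  simp only [Finset.mem_biUnion, Finset.mem_univ, true_and, rep, Finset.mem_Ico,
    Nat.zero_le]
  constructor
  · rintro ⟨i, hi1, hi2⟩
    have : (i : ℕ) + 2 ≤ n + 1 := by omega
    exact lt_of_lt_of_le hi2 (f_mono this)
  · intro hx
    set i0 := Nat.findGreatest (fun k => f k ≤ x) (n - 1) with hi0
    have h0 : f 0 ≤ x := Nat.zero_le x
    have hspec : f i0 ≤ x := Nat.findGreatest_spec (P := fun k => f k ≤ x) (Nat.zero_le _) h0
    have hle : i0 ≤ n - 1 := Nat.findGreatest_le _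
    have hx2 : x < f (i0 + 2) := by
      by_contra hcon
      push_neg at hcon
      rcases Nat.lt_or_ge i0 (n - 1) with h | h
      · have := Nat.findGreatest_is_greatest (P := fun k => f k ≤ x)
          (show i0 < i0 + 1 by omega) (show i0 + 1 ≤ n - 1 by omega)
        exact this (le_trans (f_mono (by omega)) hcon)
      · have : i0 = n - 1 := by omega
        rw [this] at hcon
        have : n - 1 + 2 = n + 1 := by omega
        rw [this] at hcon
        omega
    exact ⟨⟨i0, by omega⟩, hspec, hx2⟩

end DINAux

lemma sum_odds (k : ℕ) : ∑ j ∈ Finset.range k, (2 * j + 1) = k ^ 2 := by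
  induction k with
  | zero => simp
  | succ m ih => rw [Finset.sum_range_succ, ih]; ring

open DINAux in
/-- For a directed path on an odd number `n` of vertices, `DIN = (n² + 2n + 1)/4`. -/
theorem stmt_6 (n : ℕ) (hn : Odd n) :
    IsLeast {k : ℕ | ∃ φ : Fin n → Finset ℕ, IsDIRep (DirPath n) φ ∧
        (Finset.univ.biUnion φ).card = k}
      ((n ^ 2 + 2 * n + 1) / 4) := by
  obtain ⟨t, ht⟩ := hn
  have hn1 : 1 ≤ n := by omega
  have htarget : (n ^ 2 + 2 * n + 1) / 4 = (t + 1) ^ 2 := by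
    have h : n ^ 2 + 2 * n + 1 = (t + 1) ^ 2 * 4 := by subst ht; ring
    rw [h]; omega
  constructor
  · -- membership: the explicit representation
    refine ⟨rep n, rep_isDIRep n, ?_⟩
    rw [rep_biUnion n hn1, Nat.card_Ico, htarget]
    have h2 : n + 1 = 2 * (t + 1) := by omega
    rw [h2, f_even, Nat.sub_zero]
    ring
  · -- lower bound
    rintro k ⟨φ, ⟨hne, harc⟩, hcard⟩
    -- consecutive cards increase
    have hstep : ∀ (v : ℕ) (h : v + 1 < n),
        (φ ⟨v, by omega⟩).card < (φ ⟨v + 1, h⟩).card := by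
      intro v h
      exact ((harc ⟨v, by omega⟩ ⟨v + 1, h⟩).mp rfl).2
    -- strict monotonicity of cards
    have hmono : ∀ (v u : ℕ) (hu : u < n) (hv : v < n), u < v →
        (φ ⟨u, hu⟩).card < (φ ⟨v, hv⟩).card := by
      intro v
      induction v with
      | zero => intro u hu hv huv; omega
      | succ w ih =>
        intro u hu hv huv
        rcases Nat.lt_or_ge u w with h | h
        · exact lt_trans (ih u hu (by omega) h) (hstep w hv)
        · have heq : u = w := by omega
          subst heq
          exact hstep u hv
    -- card lower bound
    have hlb : ∀ (v : ℕ) (hv : v < n), v + 1 ≤ (φ ⟨v, hv⟩).card := by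
      intro v
      induction v with
      | zero => intro hv; exact (hne ⟨0, hv⟩).card_pos
      | succ w ih =>
        intro hv
        have h1 := hstep w hv
        have h2 := ih (by omega)
        omega
    -- non-consecutive sets (increasing) are disjoint
    have hdisj : ∀ (a b : ℕ) (ha : a < n) (hb : b < n), a + 1 < b →
        Disjoint (φ ⟨a, ha⟩) (φ ⟨b, hb⟩) := by
      intro a b ha hb hab
      have hc := hmono b a ha hb (by omega)
      have hnarc : ¬ DirPath n ⟨a, ha⟩ ⟨b, hb⟩ := by
        simp only [DirPath]
        omega
      rw [harc] at hnarc
      rw [Finset.disjoint_iff_inter_eq_empty, ← Finset.not_nonempty_iff_eq_empty]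
      intro hne'
      exact hnarc ⟨hne', hc⟩
    -- the even-indexed vertices
    have hemb : ∀ j : Fin (t + 1), 2 * (j : ℕ) < n := by
      intro j
      have := j.isLt
      omega
    set emb : Fin (t + 1) → Fin n := fun j => ⟨2 * (j : ℕ), hemb j⟩ with hembdef
    set E : Finset (Fin n) := Finset.univ.image emb with hE
    have hEdisj : ∀ i ∈ E, ∀ j ∈ E, i ≠ j → Disjoint (φ i) (φ j) := by
      intro i hi j hj hij
      rw [hE, Finset.mem_image] at hi hj
      obtain ⟨a, -, rfl⟩ := hi
      obtain ⟨b, -, rfl⟩ := hj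
      have hab : (a : ℕ) ≠ (b : ℕ) := by
        intro h
        exact hij (by simp [hembdef, Fin.ext_iff, h])
      rcases Nat.lt_or_ge (a : ℕ) (b : ℕ) with h | h
      · exact hdisj (2 * a) (2 * b) (hemb a) (hemb b) (by omega)
      · exact (hdisj (2 * b) (2 * a) (hemb b) (hemb a) (by omega)).symm
    have hsub : E.biUnion φ ⊆ Finset.univ.biUnion φ :=
      Finset.biUnion_subset_biUnion_of_subset_left φ (Finset.subset_univ E)
    have h1 : (E.biUnion φ).card ≤ k := by
      rw [← hcard]
      exact Finset.card_le_card hsub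
    have h2 : (E.biUnion φ).card = ∑ i ∈ E, (φ i).card := Finset.card_biUnion hEdisj
    have hinj : ∀ a ∈ (Finset.univ : Finset (Fin (t + 1))),
        ∀ b ∈ (Finset.univ : Finset (Fin (t + 1))), emb a = emb b → a = b := by
      intro a _ b _ hab
      have h := congrArg Fin.val hab
      simp only [hembdef] at h
      exact Fin.ext (by omega)
    have h3 : ∑ i ∈ E, (φ i).card = ∑ j : Fin (t + 1), (φ (emb j)).card := by
      rw [hE, Finset.sum_image hinj]
    have h4 : (t + 1) ^ 2 ≤ ∑ j : Fin (t + 1), (φ (emb j)).card := by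
      calc (t + 1) ^ 2 = ∑ j ∈ Finset.range (t + 1), (2 * j + 1) := (sum_odds _).symm
        _ = ∑ j : Fin (t + 1), (2 * (j : ℕ) + 1) :=
            (Fin.sum_univ_eq_sum_range (fun j => 2 * j + 1) (t + 1)).symm
        _ ≤ ∑ j : Fin (t + 1), (φ (emb j)).card := by
            apply Finset.sum_le_sum
            intro j _
            exact hlb (2 * (j : ℕ)) (hemb j)
    rw [htarget]
    calc (t + 1) ^ 2 ≤ ∑ j : Fin (t + 1), (φ (emb j)).card := h4
      _ = ∑ i ∈ E, (φ i).card := h3.symm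
      _ = (E.biUnion φ).card := h2.symm
      _ ≤ k := h1
end

section
/- For even n, the source arc-path on n vertices has directed intersection number exactly n²/2. -/
/-- The source arc-path on `n` vertices (0-indexed: paper vertex `v_i` is index `i-1`):
arcs `(v_1, v_{2k})` for `1 ≤ k ≤ ⌊n/2⌋` and `(v_k, v_{k+1})` for `1 ≤ k ≤ n-1`. -/
def SourceArcPath (n : ℕ) : Fin n → Fin n → Prop :=
  fun u v => (u : ℕ) + 1 = (v : ℕ) ∨ ((u : ℕ) = 0 ∧ Odd (v : ℕ))

/-!
Along the path `0 → 1 → ⋯ → n - 1` the sizes strictly increase, so `|φ i| ≥ |φ 0| + i`. The odd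
vertices are pairwise non-adjacent and of distinct sizes, hence pairwise disjoint; since the source
meets each of them, `|φ 0| ≥ n / 2`, and the odd sets alone already use
`∑_{j < n/2} (n/2 + 2j + 1) = n² / 2` colours.

Conversely, for `n = 2m` give vertex `i` the interval `[cut i, cut (i + 2))` of length
`m + i - i % 2`, and the odd vertex `2j + 1` also the point `j` of the source's interval `[0, m)`.
Intervals of vertices at distance at least two are disjoint, those of consecutive vertices other
than the source overlap, and everything fits into `[0, 2m²)`.
-/

theorem Finset.card_le_card_of_pairwiseDisjoint_of_inter_nonempty {ι α : Type*} [DecidableEq α]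
    {s : Finset ι} {t : ι → Finset α} {u : Finset α} (ht : (s : Set ι).PairwiseDisjoint t)
    (hu : ∀ i ∈ s, (u ∩ t i).Nonempty) : s.card ≤ u.card :=
  Finset.card_le_card_of_forall_subsingleton (fun i x => x ∈ t i)
    (fun i hi => by simpa only [Finset.Nonempty, Finset.mem_inter] using hu i hi)
    (fun x _ _ hi _ hj => ht.elim_finset hi.1 hj.1 x hi.2 hj.2)

theorem sum_range_add_two_mul_add_one (a k : ℕ) :
    ∑ j ∈ Finset.range k, (a + (2 * j + 1)) = k * a + k ^ 2 := by
  induction k with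
  | zero => simp
  | succ k ih => rw [Finset.sum_range_succ, ih]; ring

namespace IsDIRep

variable {V : Type*} {A : V → V → Prop} {φ : V → Finset ℕ}

theorem inter_nonempty (hφ : IsDIRep A φ) {u v : V} (h : A u v) : (φ u ∩ φ v).Nonempty :=
  ((hφ.2 u v).1 h).1

theorem card_lt (hφ : IsDIRep A φ) {u v : V} (h : A u v) : (φ u).card < (φ v).card :=
  ((hφ.2 u v).1 h).2

theorem disjoint_of_card_lt (hφ : IsDIRep A φ) {u v : V} (hcard : (φ u).card < (φ v).card)
    (h : ¬A u v) : Disjoint (φ u) (φ v) := by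
  rw [Finset.disjoint_iff_inter_eq_empty, ← Finset.not_nonempty_iff_eq_empty]
  exact fun hne => h ((hφ.2 u v).2 ⟨hne, hcard⟩)

end IsDIRep

namespace SourceArcPath

section LowerBound

variable {n : ℕ} {φ : Fin n → Finset ℕ}

theorem card_add_le (hφ : IsDIRep (SourceArcPath n) φ) {i j : Fin n} (hij : i ≤ j) :
    (φ i).card + (j - i : ℕ) ≤ (φ j).card := by
  obtain ⟨d, hd⟩ := Nat.exists_eq_add_of_le (Fin.le_def.1 hij)
  induction d generalizing j with
  | zero => simp [Fin.ext (hd.trans i.val.add_zero)]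
  | succ d ih =>
    let k : Fin n := ⟨i + d, by omega⟩
    have hk : (k : ℕ) = i + d := rfl
    have hik := ih (j := k) (Fin.le_def.2 (by omega)) hk
    have hkj : (φ k).card < (φ j).card := hφ.card_lt (Or.inl (by omega))
    omega

theorem disjoint_of_odd (hφ : IsDIRep (SourceArcPath n) φ) {i j : Fin n} (hij : i ≠ j)
    (hi : Odd (i : ℕ)) (hj : Odd (j : ℕ)) : Disjoint (φ i) (φ j) := by
  wlog hlt : i < j generalizing i j
  · exact (this hij.symm hj hi (lt_of_le_of_ne (not_lt.1 hlt) hij.symm)).symm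
  rw [Nat.odd_iff] at hi hj
  refine hφ.disjoint_of_card_lt ?_ ?_
  · have := card_add_le hφ hlt.le
    have : (i : ℕ) < j := hlt
    omega
  · rintro (h | ⟨h, -⟩) <;> omega

theorem two_mul_sq_le_card_biUnion {m : ℕ} {φ : Fin (2 * m) → Finset ℕ}
    (hφ : IsDIRep (SourceArcPath (2 * m)) φ) : 2 * m ^ 2 ≤ (Finset.univ.biUnion φ).card := by
  rcases Nat.eq_zero_or_pos m with rfl | hm
  · simp
  let src : Fin (2 * m) := ⟨0, by omega⟩
  let odd : Fin m → Fin (2 * m) := fun j => ⟨2 * j + 1, by omega⟩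
  have hdisj : ((Finset.univ : Finset (Fin m)) : Set (Fin m)).PairwiseDisjoint (φ ∘ odd) :=
    fun j _ k _ hjk => disjoint_of_odd hφ (by simpa [odd, Fin.ext_iff] using hjk)
      ⟨j, rfl⟩ ⟨k, rfl⟩
  have hsrc : m ≤ (φ src).card := by
    simpa using Finset.card_le_card_of_pairwiseDisjoint_of_inter_nonempty hdisj
      fun j _ => hφ.inter_nonempty (u := src) (v := odd j) (Or.inr ⟨rfl, j, rfl⟩)
  have hodd (j : Fin m) : m + (2 * j + 1) ≤ (φ (odd j)).card := by
    have := card_add_le hφ (i := src) (j := odd j) (Fin.le_def.2 (Nat.zero_le _))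
    have hj : (odd j : ℕ) = 2 * j + 1 := rfl
    have h0 : (src : ℕ) = 0 := rfl
    omega
  calc 2 * m ^ 2 = ∑ j : Fin m, (m + (2 * j + 1)) := by
        rw [Fin.sum_univ_eq_sum_range (fun j => m + (2 * j + 1)),
          sum_range_add_two_mul_add_one]
        ring
    _ ≤ ∑ j : Fin m, (φ (odd j)).card := Finset.sum_le_sum fun j _ => hodd j
    _ = (Finset.univ.biUnion (φ ∘ odd)).card := (Finset.card_biUnion hdisj).symm
    _ ≤ (Finset.univ.biUnion φ).card := Finset.card_le_card <|
        Finset.biUnion_subset.2 fun j _ => Finset.subset_biUnion_of_mem φ (Finset.mem_univ _)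

end LowerBound

section Construction

variable (m : ℕ)

def cut : ℕ → ℕ
  | 0 => 0
  | i + 1 => cut i + if Even i then m else i - 1

def rep (i : ℕ) : Finset ℕ :=
  (if Odd i then {i / 2} else ∅) ∪ Finset.Ico (cut m i) (cut m (i + 2))

theorem cut_mono : Monotone (cut m) :=
  monotone_nat_of_le_succ fun i => by simp only [cut, Nat.le_add_right]

theorem cut_add_two (i : ℕ) : cut m (i + 2) + i % 2 = cut m i + m + i := by
  simp only [cut, Nat.even_add_one, Nat.even_iff]
  split_ifs <;> omega

theorem le_cut {i : ℕ} (hi : 0 < i) : m ≤ cut m i := by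
  simpa [cut] using cut_mono m (show 1 ≤ i from hi)

theorem cut_lt_cut {i : ℕ} (hm : 0 < m) (hi : 0 < i) : cut m (i + 1) < cut m (i + 2) := by
  rcases Nat.even_or_odd i with hi' | hi'
  · simp only [cut, hi', if_true, Nat.even_add_one, not_true_eq_false, if_false,
      add_tsub_cancel_right, lt_add_iff_pos_right]
    omega
  · simp [cut, hi', hm]

theorem cut_two_mul_add_one (j : ℕ) : cut m (2 * j + 1) + j = (j + 1) * m + j ^ 2 := by
  induction j with
  | zero => simp [cut]
  | succ j ih =>
    have := cut_add_two m (2 * j + 1)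
    rw [show 2 * (j + 1) + 1 = 2 * j + 1 + 2 by ring,
      show (j + 1 + 1) * m = (j + 1) * m + m by ring,
      show (j + 1) ^ 2 = j ^ 2 + 2 * j + 1 by ring]
    omega

theorem mem_rep {i x : ℕ} :
    x ∈ rep m i ↔ i % 2 = 1 ∧ x = i / 2 ∨ cut m i ≤ x ∧ x < cut m (i + 2) := by
  unfold rep
  split_ifs with h <;> simp [Nat.odd_iff.1, h, ← Nat.not_odd_iff]

theorem card_rep {i : ℕ} (hi : i < 2 * m) : (rep m i).card = m + i := by
  have := cut_add_two m i
  unfold rep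
  split_ifs with h
  · rw [Nat.odd_iff] at h
    have := le_cut m (i := i) (by omega)
    have hdisj : Disjoint {i / 2} (Finset.Ico (cut m i) (cut m (i + 2))) := by
      simp only [Finset.disjoint_singleton_left, Finset.mem_Ico]
      omega
    rw [Finset.card_union_of_disjoint hdisj, Finset.card_singleton, Nat.card_Ico]
    omega
  · rw [Nat.not_odd_iff] at h
    simp only [Finset.empty_union, Nat.card_Ico]
    omega

theorem rep_subset_range {i : ℕ} (hi : i < 2 * m) :
    rep m i ⊆ Finset.range (cut m (2 * m + 1)) := by
  intro x hx
  rw [mem_rep] at hx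
  have := le_cut m (i := 2 * m + 1) (by omega)
  have := cut_mono m (show i + 2 ≤ 2 * m + 1 by omega)
  rw [Finset.mem_range]
  omega

theorem rep_inter_nonempty_iff {u v : ℕ} (huv : u < v) (hv : v < 2 * m) :
    (rep m u ∩ rep m v).Nonempty ↔ u + 1 = v ∨ u = 0 ∧ Odd v := by
  simp only [Finset.Nonempty, Finset.mem_inter, mem_rep, Nat.odd_iff]
  have hcut2 : cut m 2 = m := by simp [cut]
  constructor
  · rintro ⟨x, hx⟩
    by_contra h
    have := cut_mono m (show u + 2 ≤ v by omega)
    have := le_cut m (i := v) (by omega)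
    have : 0 < u → m ≤ cut m u := le_cut m
    omega
  · intro h
    by_cases hsrc : u = 0 ∧ v % 2 = 1
    · obtain ⟨rfl, hodd⟩ := hsrc
      exact ⟨v / 2, Or.inr ⟨Nat.zero_le _, by rw [hcut2]; omega⟩, Or.inl ⟨hodd, rfl⟩⟩
    · obtain ⟨hu, rfl⟩ : 0 < u ∧ u + 1 = v := by omega
      have := cut_mono m (show u ≤ u + 1 by omega)
      have := cut_lt_cut m (by omega) hu
      have := cut_mono m (show u + 2 ≤ u + 1 + 2 by omega)
      exact ⟨cut m (u + 1), by omega⟩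

theorem isDIRep_rep : IsDIRep (SourceArcPath (2 * m)) fun v => rep m v := by
  refine ⟨fun v => Finset.card_pos.1 (by rw [card_rep m v.2]; omega), fun u v => ?_⟩
  rw [card_rep m u.2, card_rep m v.2]
  constructor
  · intro h
    have huv : (u : ℕ) < v := by rcases h with h | ⟨h, k, hk⟩ <;> omega
    exact ⟨(rep_inter_nonempty_iff m huv v.2).2 h, by omega⟩
  · exact fun ⟨h, hlt⟩ => (rep_inter_nonempty_iff m (by omega) v.2).1 h

theorem card_biUnion_rep :
    (Finset.univ.biUnion fun v : Fin (2 * m) => rep m v).card = 2 * m ^ 2 := by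
  refine le_antisymm ?_ (two_mul_sq_le_card_biUnion (isDIRep_rep m))
  have hcut : cut m (2 * m + 1) = 2 * m ^ 2 := by
    have := cut_two_mul_add_one m m
    rw [add_mul, one_mul] at this
    nlinarith
  calc _ ≤ (Finset.range (cut m (2 * m + 1))).card :=
        Finset.card_le_card (Finset.biUnion_subset.2 fun v _ => rep_subset_range m v.2)
    _ = 2 * m ^ 2 := by rw [Finset.card_range, hcut]

end Construction

end SourceArcPath

/-- For even `n`, the source arc-path on `n` vertices has `DIN = n²/2`. -/
theorem stmt_7 (n : ℕ) (hn : Even n) :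
    IsLeast {k : ℕ | ∃ φ : Fin n → Finset ℕ, IsDIRep (SourceArcPath n) φ ∧
        (Finset.univ.biUnion φ).card = k}
      (n ^ 2 / 2) := by
  obtain ⟨m, rfl⟩ := hn
  rw [← two_mul, show (2 * m) ^ 2 / 2 = 2 * m ^ 2 by ring_nf; omega]
  exact ⟨⟨_, SourceArcPath.isDIRep_rep m, SourceArcPath.card_biUnion_rep m⟩,
    fun k ⟨φ, hφ, hk⟩ => hk ▸ SourceArcPath.two_mul_sq_le_card_biUnion hφ⟩
end

section
/- Any directed intersection representation of the source arc-path on an even number n of vertices uses at least n²/2 colors. -/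
/-- Any directed intersection representation of the source arc-path on an even number `n`
of vertices uses at least `n²/2` colors. -/
theorem stmt_8 (n : ℕ) (hn : Even n) (φ : Fin n → Finset ℕ)
    (hφ : IsDIRep (SourceArcPath n) φ) :
    n ^ 2 / 2 ≤ (Finset.univ.biUnion φ).card := by
  obtain ⟨m, hm⟩ := hn
  rcases Nat.eq_zero_or_pos m with h0 | hmpos
  · have hn0 : n = 0 := by omega
    subst hn0
    simp
  obtain ⟨hne, hiff⟩ := hφ
  -- consecutive cards strictly increase
  have key : ∀ i j : Fin n, (i : ℕ) + 1 = (j : ℕ) → (φ i).card < (φ j).card :=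
    fun i j h => ((hiff i j).1 (Or.inl h)).2
  -- cards increase by at least the gap
  have mono : ∀ d (i j : Fin n), (i : ℕ) + d = (j : ℕ) → 0 < d →
      (φ i).card + d ≤ (φ j).card := by
    intro d
    induction d with
    | zero => intro i j _ h; omega
    | succ d ih =>
      intro i j hij _
      rcases Nat.eq_zero_or_pos d with hd | hd
      · subst hd
        have := key i j (by omega)
        omega
      · have hj' : (i : ℕ) + d < n := by
          have := j.isLt; omega
        set j' : Fin n := ⟨(i : ℕ) + d, hj'⟩ with hj'def
        have hv : (j' : ℕ) = (i : ℕ) + d := rfl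
        have h1 := ih i j' (by omega) hd
        have h2 := key j' j (by omega)
        omega
  have cardlt : ∀ i j : Fin n, (i : ℕ) < (j : ℕ) → (φ i).card < (φ j).card := by
    intro i j h
    have := mono ((j : ℕ) - (i : ℕ)) i j (by omega) (by omega)
    omega
  -- no shared color between non-adjacent vertices
  have disj : ∀ i j : Fin n, (i : ℕ) < (j : ℕ) → ¬ SourceArcPath n i j →
      ∀ c, c ∈ φ i → c ∈ φ j → False := by
    intro i j hij harc c hci hcj
    exact harc ((hiff i j).2 ⟨⟨c, Finset.mem_inter.2 ⟨hci, hcj⟩⟩, cardlt i j hij⟩)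
  have hzlt : (0 : ℕ) < n := by omega
  set zero : Fin n := ⟨0, hzlt⟩ with hzero
  set o : Fin m → Fin n := fun k => ⟨2 * (k : ℕ) + 1, by have := k.isLt; omega⟩ with ho
  have hok : ∀ k : Fin m, (o k : ℕ) = 2 * (k : ℕ) + 1 := fun k => rfl
  -- φ 0 meets each odd vertex's set
  have hint : ∀ k : Fin m, (φ zero ∩ φ (o k)).Nonempty := by
    intro k
    have harc : SourceArcPath n zero (o k) := by
      refine Or.inr ⟨rfl, ?_⟩
      rw [hok k, Nat.odd_iff]
      omega
    exact ((hiff _ _).1 harc).1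
  set c : Fin m → ℕ := fun k => (hint k).choose with hc
  have hcmem : ∀ k : Fin m, c k ∈ φ zero ∧ c k ∈ φ (o k) := by
    intro k
    have := (hint k).choose_spec
    exact Finset.mem_inter.1 this
  -- odd-odd vertices have no arc
  have noarc : ∀ k k' : Fin m, (k : ℕ) < (k' : ℕ) → ¬ SourceArcPath n (o k) (o k') := by
    intro k k' hkk' harc
    rcases harc with h | ⟨h, _⟩
    · rw [hok, hok] at h; omega
    · rw [hok] at h; omega
  -- the chosen colors are distinct, so card (φ zero) ≥ m
  have a0m : m ≤ (φ zero).card := by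
    have hinj : Set.InjOn c (Finset.univ : Finset (Fin m)) := by
      intro k _ k' _ hkk'
      by_contra hne'
      rcases lt_trichotomy ((k : ℕ)) ((k' : ℕ)) with h | h | h
      · exact disj (o k) (o k') (by rw [hok, hok]; omega) (noarc k k' h) (c k)
          (hcmem k).2 (hkk' ▸ (hcmem k').2)
      · exact hne' (Fin.ext h)
      · exact disj (o k') (o k) (by rw [hok, hok]; omega) (noarc k' k h) (c k')
          (hcmem k').2 (hkk' ▸ (hcmem k).2)
    have := Finset.card_le_card_of_injOn c (fun k _ => (hcmem k).1) hinj
    simpa using this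
  -- card of each odd vertex
  have aodd : ∀ k : Fin m, m + (2 * (k : ℕ) + 1) ≤ (φ (o k)).card := by
    intro k
    have hz0 : (zero : ℕ) = 0 := rfl
    have := mono (2 * (k : ℕ) + 1) zero (o k) (by rw [hok, hz0]; omega) (by omega)
    omega
  -- odd sets pairwise disjoint
  have hdisj : ∀ k ∈ (Finset.univ : Finset (Fin m)), ∀ k' ∈ (Finset.univ : Finset (Fin m)),
      k ≠ k' → Disjoint (φ (o k)) (φ (o k')) := by
    intro k _ k' _ hne'
    rcases lt_trichotomy ((k : ℕ)) ((k' : ℕ)) with h | h | h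
    · exact Finset.disjoint_left.2 fun x hx hx' =>
        disj (o k) (o k') (by rw [hok, hok]; omega) (noarc k k' h) x hx hx'
    · exact absurd (Fin.ext h) hne'
    · exact Finset.disjoint_right.2 fun x hx hx' =>
        disj (o k') (o k) (by rw [hok, hok]; omega) (noarc k' k h) x hx hx'
  have hsub : (Finset.univ.biUnion fun k : Fin m => φ (o k)) ⊆ Finset.univ.biUnion φ := by
    intro x hx
    simp only [Finset.mem_biUnion, Finset.mem_univ, true_and] at hx ⊢
    obtain ⟨k, hk⟩ := hx
    exact ⟨o k, hk⟩
  have hcardU := Finset.card_biUnion hdisj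
  have hsum : ∑ k : Fin m, (m + (2 * (k : ℕ) + 1)) ≤ ∑ k : Fin m, (φ (o k)).card :=
    Finset.sum_le_sum fun k _ => aodd k
  have sumodd : ∀ M : ℕ, ∑ k ∈ Finset.range M, (2 * k + 1) = M * M := by
    intro M
    induction M with
    | zero => simp
    | succ M ih => rw [Finset.sum_range_succ, ih]; ring
  have hlhs : ∑ k : Fin m, (m + (2 * (k : ℕ) + 1)) = 2 * (m * m) := by
    rw [Fin.sum_univ_eq_sum_range (fun k => m + (2 * k + 1)) m,
      Finset.sum_add_distrib, Finset.sum_const, Finset.card_range, sumodd m,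
      smul_eq_mul]
    ring
  have hfinal : 2 * (m * m) ≤ (Finset.univ.biUnion φ).card := by
    calc 2 * (m * m) = ∑ k : Fin m, (m + (2 * (k : ℕ) + 1)) := hlhs.symm
      _ ≤ ∑ k : Fin m, (φ (o k)).card := hsum
      _ = (Finset.univ.biUnion fun k : Fin m => φ (o k)).card := hcardU.symm
      _ ≤ (Finset.univ.biUnion φ).card := Finset.card_le_card hsub
  have hpow : n ^ 2 = 2 * (2 * (m * m)) := by rw [hm]; ring
  omega
end

section
/- In any directed intersection representation of the source arc-path on an even number n of vertices, the color sets of the even-indexed vertices v_2, v_4, ..., v_n are pairwise disjoint. -/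
/-- In any directed intersection representation of the source arc-path on an even number
`n` of vertices, the color sets of the even-indexed paper vertices `v_2, v_4, …, v_n`
are pairwise disjoint. -/
theorem stmt_9 (n : ℕ) (hn : Even n) (φ : Fin n → Finset ℕ)
    (hφ : IsDIRep (SourceArcPath n) φ) :
    ∀ u v : Fin n, Odd (u : ℕ) → Odd (v : ℕ) → u ≠ v → Disjoint (φ u) (φ v) := by
  -- cards are strictly increasing along consecutive indices
  have step : ∀ (a : ℕ) (h : a + 1 < n),
      (φ ⟨a, Nat.lt_of_succ_lt h⟩).card < (φ ⟨a + 1, h⟩).card := by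
    intro a h
    have hA : SourceArcPath n ⟨a, Nat.lt_of_succ_lt h⟩ ⟨a + 1, h⟩ := Or.inl rfl
    exact ((hφ.2 _ _).mp hA).2
  have mono : ∀ (a b : ℕ) (hb : b < n) (hab : a < b),
      (φ ⟨a, lt_trans hab hb⟩).card < (φ ⟨b, hb⟩).card := by
    intro a b
    induction b with
    | zero => intro hb hab; omega
    | succ c ih =>
      intro hb hab
      rcases Nat.lt_or_ge a c with hac | hac
      · exact lt_trans (ih (Nat.lt_of_succ_lt hb) hac) (step c hb)
      · have : a = c := by omega
        subst this
        exact step a hb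
  -- main argument
  have key : ∀ u v : Fin n, Odd (u : ℕ) → Odd (v : ℕ) → u < v → Disjoint (φ u) (φ v) := by
    intro u v hu hv huv
    rw [Finset.disjoint_left]
    intro x hxu hxv
    have hcard : (φ u).card < (φ v).card := by
      have := mono u v v.isLt huv
      simpa using this
    have hA : SourceArcPath n u v := (hφ.2 u v).mpr ⟨⟨x, Finset.mem_inter.mpr ⟨hxu, hxv⟩⟩, hcard⟩
    rcases hA with h | ⟨h0, _⟩
    · rcases hu with ⟨k, hk⟩
      rcases hv with ⟨l, hl⟩
      omega
    · rcases hu with ⟨k, hk⟩; omega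
  intro u v hu hv hne
  rcases lt_or_gt_of_ne hne with h | h
  · exact key u v hu hv h
  · exact (key v u hv hu h).symm
end

section
/- In any directed intersection representation of the source arc-path on an even number n of vertices, the color set of v_1 has size at least n/2. -/
/-- In any directed intersection representation of the source arc-path on an even number
`n > 0` of vertices, the color set of `v_1` (index `0`) has size at least `n/2`. -/
theorem stmt_12 (n : ℕ) (hn : Even n) (hpos : 0 < n) (φ : Fin n → Finset ℕ)
    (hφ : IsDIRep (SourceArcPath n) φ) :
    n / 2 ≤ (φ ⟨0, hpos⟩).card := by
  classical
  obtain ⟨hne, h2⟩ := hφ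
  obtain ⟨m, hm⟩ := hn
  set z : Fin n := ⟨0, hpos⟩ with hz
  have step : ∀ (a b : Fin n), (a : ℕ) + 1 = (b : ℕ) → (φ a).card < (φ b).card :=
    fun a b h => ((h2 a b).1 (Or.inl h)).2
  have mono : ∀ k : ℕ, ∀ (a b : Fin n), (b : ℕ) = (a : ℕ) + k + 1 →
      (φ a).card < (φ b).card := by
    intro k
    induction k with
    | zero => intro a b h; exact step a b (by omega)
    | succ k ih =>
      intro a b h
      have hc : (a : ℕ) + k + 1 < n := by have := b.isLt; omega
      exact lt_trans (ih a ⟨(a : ℕ) + k + 1, hc⟩ rfl)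
        (step ⟨(a : ℕ) + k + 1, hc⟩ b (by simp; omega))
  have key : ∀ i (h : 2 * i + 1 < n), (φ z ∩ φ ⟨2 * i + 1, h⟩).Nonempty := by
    intro i h
    exact ((h2 z ⟨2 * i + 1, h⟩).1 (Or.inr ⟨rfl, ⟨i, rfl⟩⟩)).1
  let f : ℕ → ℕ := fun i => if h : 2 * i + 1 < n then (key i h).choose else 0
  have hfspec : ∀ i (h : 2 * i + 1 < n), f i ∈ φ z ∧ f i ∈ φ ⟨2 * i + 1, h⟩ := by
    intro i h
    have := (key i h).choose_spec
    simp only [Finset.mem_inter] at this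
    simpa [f, dif_pos h] using this
  have hlt : ∀ i, i ∈ Finset.range (n / 2) → 2 * i + 1 < n := by
    intro i hi; simp only [Finset.mem_range] at hi; omega
  have hmaps : ∀ i ∈ Finset.range (n / 2), f i ∈ φ z :=
    fun i hi => (hfspec i (hlt i hi)).1
  have hinj : Set.InjOn f (Finset.range (n / 2)) := by
    intro i hi j hj hij
    by_contra hne'
    rcases Ne.lt_or_gt hne' with hlt' | hlt'
    · have hi' := hlt i hi
      have hj' := hlt j hj
      have hcard : (φ ⟨2 * i + 1, hi'⟩).card < (φ ⟨2 * j + 1, hj'⟩).card :=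
        mono (2 * (j - i) - 1) _ _ (by simp; omega)
      have hinter : (φ (⟨2 * i + 1, hi'⟩ : Fin n) ∩ φ ⟨2 * j + 1, hj'⟩).Nonempty := by
        refine ⟨f i, Finset.mem_inter.2 ⟨(hfspec i hi').2, ?_⟩⟩
        rw [hij]; exact (hfspec j hj').2
      have harc := (h2 ⟨2 * i + 1, hi'⟩ ⟨2 * j + 1, hj'⟩).2 ⟨hinter, hcard⟩
      rcases harc with h | ⟨h, _⟩ <;> simp at h <;> omega
    · have hi' := hlt i hi
      have hj' := hlt j hj
      have hcard : (φ ⟨2 * j + 1, hj'⟩).card < (φ ⟨2 * i + 1, hi'⟩).card :=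
        mono (2 * (i - j) - 1) _ _ (by simp; omega)
      have hinter : (φ (⟨2 * j + 1, hj'⟩ : Fin n) ∩ φ ⟨2 * i + 1, hi'⟩).Nonempty := by
        refine ⟨f i, Finset.mem_inter.2 ⟨?_, (hfspec i hi').2⟩⟩
        rw [hij]; exact (hfspec j hj').2
      have harc := (h2 ⟨2 * j + 1, hj'⟩ ⟨2 * i + 1, hi'⟩).2 ⟨hinter, hcard⟩
      rcases harc with h | ⟨h, _⟩ <;> simp at h <;> omega
  calc n / 2 = (Finset.range (n / 2)).card := (Finset.card_range _).symm
    _ ≤ (φ z).card := Finset.card_le_card_of_injOn f hmaps hinj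
end

section
/- For even n ≥ 8, with m = ⌊n²/16 − n/4 + 1/4⌋ − 1, the source arc-path augmented by m suitable arcs among odd-indexed vertices (all arcs between X = {v_3,...,v_{n/2}} and Y = {v_{n/2+2},...,v_{n−1}} with odd indices, except one, when (n−2)/2 is even) has directed intersection number at least n²/2 + m. -/
/-- The source arc-path on `n` vertices augmented (case `(n-2)/2` even) by all arcs from
`X = {v_3, v_5, …, v_{n/2}}` to `Y = {v_{n/2+2}, …, v_{n-1}}` (odd paper indices) except
`(v_{n/2}, v_{n/2+2})`.  Here vertices are 0-indexed: paper vertex `v_i` is index `i-1`,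
so odd paper indices become even `Fin` indices. -/
def AugSourceArcPath (n : ℕ) : Fin n → Fin n → Prop :=
  fun u v =>
    ((u : ℕ) + 1 = (v : ℕ) ∨ ((u : ℕ) = 0 ∧ Odd (v : ℕ))) ∨
    (Even (u : ℕ) ∧ Even (v : ℕ) ∧ 2 ≤ (u : ℕ) ∧ (u : ℕ) ≤ n / 2 - 1 ∧
      n / 2 + 1 ≤ (v : ℕ) ∧ (v : ℕ) ≤ n - 2 ∧
      ¬ ((u : ℕ) = n / 2 - 1 ∧ (v : ℕ) = n / 2 + 1))

lemma hA_arith {n t : ℕ} (hnt : n = 4*t+2) (u v : Fin n) :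
    AugSourceArcPath n u v ↔
      (((u:ℕ)+1 = (v:ℕ) ∨ ((u:ℕ) = 0 ∧ (v:ℕ) % 2 = 1)) ∨
       ((u:ℕ) % 2 = 0 ∧ (v:ℕ) % 2 = 0 ∧ 2 ≤ (u:ℕ) ∧ (u:ℕ) ≤ 2*t ∧
        2*t+2 ≤ (v:ℕ) ∧ (v:ℕ) ≤ 4*t ∧ ¬((u:ℕ) = 2*t ∧ (v:ℕ) = 2*t+2))) := by
  simp only [AugSourceArcPath, Nat.odd_iff, Nat.even_iff]
  subst hnt
  omega

lemma card_add {n t : ℕ} {φ : Fin n → Finset ℕ} (hnt : n = 4*t+2)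
    (hφ : IsDIRep (AugSourceArcPath n) φ) :
    ∀ (k : ℕ) (hk : k < n) (u : Fin n), (u:ℕ) < k →
      (φ u).card + (k - (u:ℕ)) ≤ (φ ⟨k, hk⟩).card := by
  intro k
  induction k with
  | zero => intro hk u hu; exact absurd hu (Nat.not_lt_zero _)
  | succ k ih =>
    intro hk u hu
    have hk' : k < n := by omega
    have harc : AugSourceArcPath n ⟨k, hk'⟩ ⟨k+1, hk⟩ := by
      rw [hA_arith hnt]; exact Or.inl (Or.inl rfl)
    have hlt : (φ ⟨k, hk'⟩).card < (φ ⟨k+1, hk⟩).card := ((hφ.2 _ _).mp harc).2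
    rcases Nat.lt_or_ge (u:ℕ) k with h | h
    · have := ih hk' u h; omega
    · have hu' : u = ⟨k, hk'⟩ := Fin.ext (show (u:ℕ) = k by omega)
      rw [hu']
      simp only [Fin.val_mk]
      omega

lemma card_lt {n t : ℕ} {φ : Fin n → Finset ℕ} (hnt : n = 4*t+2)
    (hφ : IsDIRep (AugSourceArcPath n) φ) {u v : Fin n} (h : (u:ℕ) < (v:ℕ)) :
    (φ u).card < (φ v).card := by
  have := card_add hnt hφ (v:ℕ) v.isLt u h
  simp only [Fin.eta] at this
  omega

lemma share_arc {n t : ℕ} {φ : Fin n → Finset ℕ} (hnt : n = 4*t+2)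
    (hφ : IsDIRep (AugSourceArcPath n) φ) {u v : Fin n} (h : (u:ℕ) < (v:ℕ)) {x : ℕ}
    (hx : x ∈ φ u) (hy : x ∈ φ v) : AugSourceArcPath n u v :=
  (hφ.2 u v).mpr ⟨⟨x, Finset.mem_inter.mpr ⟨hx, hy⟩⟩, card_lt hnt hφ h⟩

lemma no_three {n t : ℕ} {φ : Fin n → Finset ℕ} (hnt : n = 4*t+2)
    (hφ : IsDIRep (AugSourceArcPath n) φ) {a b c : Fin n}
    (hab : (a:ℕ) < (b:ℕ)) (hbc : (b:ℕ) < (c:ℕ))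
    {x : ℕ} (ha : x ∈ φ a) (hb : x ∈ φ b) (hc : x ∈ φ c) : False := by
  have h1 := share_arc hnt hφ hab ha hb
  have h2 := share_arc hnt hφ hbc hb hc
  have h3 := share_arc hnt hφ (hab.trans hbc) ha hc
  rw [hA_arith hnt] at h1 h2 h3
  omega

lemma no_three' {n t : ℕ} {φ : Fin n → Finset ℕ} (hnt : n = 4*t+2)
    (hφ : IsDIRep (AugSourceArcPath n) φ) {a b c : Fin n}
    (h1 : (a:ℕ) ≠ (b:ℕ)) (h2 : (a:ℕ) ≠ (c:ℕ)) (h3 : (b:ℕ) ≠ (c:ℕ))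
    {x : ℕ} (ha : x ∈ φ a) (hb : x ∈ φ b) (hc : x ∈ φ c) : False := by
  rcases Nat.lt_trichotomy (a:ℕ) (b:ℕ) with hab | hab | hab
  · rcases Nat.lt_trichotomy (b:ℕ) (c:ℕ) with hbc | hbc | hbc
    · exact no_three hnt hφ hab hbc ha hb hc
    · exact absurd hbc h3
    · rcases Nat.lt_trichotomy (a:ℕ) (c:ℕ) with hac | hac | hac
      · exact no_three hnt hφ hac hbc ha hc hb
      · exact absurd hac h2
      · exact no_three hnt hφ hac hab hc ha hb
  · exact absurd hab h1
  · rcases Nat.lt_trichotomy (a:ℕ) (c:ℕ) with hac | hac | hac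
    · exact no_three hnt hφ hab hac hb ha hc
    · exact absurd hac h2
    · rcases Nat.lt_trichotomy (b:ℕ) (c:ℕ) with hbc | hbc | hbc
      · exact no_three hnt hφ hbc hac hb hc ha
      · exact absurd hbc h3
      · exact no_three hnt hφ hbc hab hc hb ha

/-- For even `n ≥ 8` with `(n-2)/2` even and `m = ⌊n²/16 − n/4 + 1/4⌋ − 1`, the augmented
source arc-path has directed intersection number at least `n²/2 + m`. -/
theorem stmt_13 (n : ℕ) (hn : Even n) (hn8 : 8 ≤ n) (hcase : Even ((n - 2) / 2))
    (m : ℤ) (hm : m = ⌊(n : ℚ) ^ 2 / 16 - (n : ℚ) / 4 + 1 / 4⌋ - 1)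
    (φ : Fin n → Finset ℕ) (hφ : IsDIRep (AugSourceArcPath n) φ) :
    (n : ℤ) ^ 2 / 2 + m ≤ ((Finset.univ.biUnion φ).card : ℤ) := by
  obtain ⟨t, hnt, ht⟩ : ∃ t, n = 4*t+2 ∧ 2 ≤ t := by
    obtain ⟨k, hk⟩ := hn
    obtain ⟨j, hj⟩ := hcase
    exact ⟨j, by omega, by omega⟩
  have hm' : m = ((t*t : ℕ) : ℤ) - 1 := by
    have hq : (n : ℚ) ^ 2 / 16 - (n : ℚ) / 4 + 1 / 4 = (((t*t : ℕ) : ℤ) : ℚ) := by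
      rw [hnt]; push_cast; ring
    rw [hq, Int.floor_intCast] at hm
    exact hm
  have hnpos : 0 < n := by omega
  set N := Finset.univ.biUnion φ with hN
  -- odd-indexed vertices
  set ψ : ℕ → Fin n := fun i => ⟨(2*i+1) % n, Nat.mod_lt _ hnpos⟩ with hψd
  have hψv : ∀ i, i < 2*t+1 → (ψ i : ℕ) = 2*i+1 := by
    intro i hi
    simp only [hψd]
    exact Nat.mod_eq_of_lt (by omega)
  have hodd_disj : ∀ i ∈ Finset.range (2*t+1), ∀ j ∈ Finset.range (2*t+1), i ≠ j →
      Disjoint (φ (ψ i)) (φ (ψ j)) := by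
    intro i hi j hj hij
    simp only [Finset.mem_range] at hi hj
    rw [Finset.disjoint_left]
    intro x hxi hxj
    have key : ∀ a b : ℕ, a < 2*t+1 → b < 2*t+1 → a < b →
        x ∈ φ (ψ a) → x ∈ φ (ψ b) → False := by
      intro a b ha hb hab hxa hxb
      have harc := share_arc hnt hφ (u := ψ a) (v := ψ b)
        (by rw [hψv a ha, hψv b hb]; omega) hxa hxb
      rw [hA_arith hnt] at harc
      rw [hψv a ha, hψv b hb] at harc
      omega
    rcases Nat.lt_trichotomy i j with h | h | h
    · exact key i j hi hj h hxi hxj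
    · exact hij h
    · exact key j i hj hi h hxj hxi
  -- source vertex has many colors
  set v0 : Fin n := ⟨0, hnpos⟩ with hv0d
  have hv0v : (v0 : ℕ) = 0 := rfl
  have hc0 : 2*t+1 ≤ (φ v0).card := by
    have hex : ∀ i, ∃ x, i < 2*t+1 → x ∈ φ v0 ∧ x ∈ φ (ψ i) := by
      intro i
      by_cases hi : i < 2*t+1
      · have harc : AugSourceArcPath n v0 (ψ i) := by
          rw [hA_arith hnt]
          refine Or.inl (Or.inr ⟨hv0v, ?_⟩)
          rw [hψv i hi]; omega
        obtain ⟨x, hx⟩ := ((hφ.2 _ _).mp harc).1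
        rw [Finset.mem_inter] at hx
        exact ⟨x, fun _ => hx⟩
      · exact ⟨0, fun h => absurd h hi⟩
    choose g hg using hex
    have hinj : Set.InjOn g (Finset.range (2*t+1)) := by
      intro i hi j hj hij
      by_contra hne
      have hi' := Finset.mem_range.mp (Finset.mem_coe.mp hi)
      have hj' := Finset.mem_range.mp (Finset.mem_coe.mp hj)
      have h1 : g i ∈ φ (ψ i) := (hg i hi').2
      have h2 : g j ∈ φ (ψ j) := (hg j hj').2
      rw [hij] at h1
      exact absurd h2 (Finset.disjoint_left.mp
        (hodd_disj i (Finset.mem_range.mpr hi') j (Finset.mem_range.mpr hj') hne) h1)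
    calc 2*t+1 = (Finset.range (2*t+1)).card := (Finset.card_range _).symm
      _ ≤ (φ v0).card := Finset.card_le_card_of_injOn g
          (fun i hi => (hg i (Finset.mem_range.mp hi)).1) hinj
  -- cards of odd vertices
  have hcψ : ∀ i, i < 2*t+1 → 2*t+2*i+2 ≤ (φ (ψ i)).card := by
    intro i hi
    have h1 := card_add hnt hφ (2*i+1) (by omega) v0 (by rw [hv0v]; omega)
    have h2 : ψ i = ⟨2*i+1, by omega⟩ := Fin.ext (hψv i hi)
    rw [h2]
    rw [hv0v] at h1
    omega
  have hsum : ∀ k : ℕ, ∑ i ∈ Finset.range k, (2*t+2*i+2) = 2*k*t + k*k + k := by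
    intro k
    induction k with
    | zero => simp
    | succ k ih => rw [Finset.sum_range_succ, ih]; ring
  set Bodd := (Finset.range (2*t+1)).biUnion (fun i => φ (ψ i)) with hBodd
  have hBcard : 8*(t*t) + 8*t + 2 ≤ Bodd.card := by
    rw [hBodd, Finset.card_biUnion hodd_disj]
    calc 8*(t*t)+8*t+2 = 2*(2*t+1)*t + (2*t+1)*(2*t+1) + (2*t+1) := by ring
      _ = ∑ i ∈ Finset.range (2*t+1), (2*t+2*i+2) := (hsum _).symm
      _ ≤ ∑ i ∈ Finset.range (2*t+1), (φ (ψ i)).card :=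
          Finset.sum_le_sum (fun i hi => hcψ i (Finset.mem_range.mp hi))
  -- augmented arcs
  set uf : ℕ×ℕ → Fin n := fun p => ⟨(2*p.1+2) % n, Nat.mod_lt _ hnpos⟩ with hufd
  set vf : ℕ×ℕ → Fin n := fun p => ⟨(2*p.2+2*t+2) % n, Nat.mod_lt _ hnpos⟩ with hvfd
  set Q : Finset (ℕ×ℕ) := (Finset.range t ×ˢ Finset.range t).erase (t-1, 0) with hQd
  have hQmem : ∀ p ∈ Q, p.1 < t ∧ p.2 < t ∧ ¬(p.1 = t-1 ∧ p.2 = 0) := by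
    intro p hp
    rw [hQd, Finset.mem_erase, Finset.mem_product, Finset.mem_range, Finset.mem_range] at hp
    refine ⟨hp.2.1, hp.2.2, ?_⟩
    rintro ⟨h1, h2⟩
    exact hp.1 (Prod.ext h1 h2)
  have hufv : ∀ p ∈ Q, (uf p : ℕ) = 2*p.1+2 := by
    intro p hp
    simp only [hufd]
    exact Nat.mod_eq_of_lt (by have := hQmem p hp; omega)
  have hvfv : ∀ p ∈ Q, (vf p : ℕ) = 2*p.2+2*t+2 := by
    intro p hp
    simp only [hvfd]
    exact Nat.mod_eq_of_lt (by have := hQmem p hp; omega)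
  have haug : ∀ p ∈ Q, AugSourceArcPath n (uf p) (vf p) := by
    intro p hp
    rw [hA_arith hnt]
    right
    rw [hufv p hp, hvfv p hp]
    have := hQmem p hp
    omega
  have hexQ : ∀ p, ∃ x, p ∈ Q → x ∈ φ (uf p) ∧ x ∈ φ (vf p) := by
    intro p
    by_cases hp : p ∈ Q
    · obtain ⟨x, hx⟩ := ((hφ.2 _ _).mp (haug p hp)).1
      rw [Finset.mem_inter] at hx
      exact ⟨x, fun _ => hx⟩
    · exact ⟨0, fun h => absurd h hp⟩
  choose χ hχ using hexQ
  have hχN : ∀ p ∈ Q, χ p ∈ N :=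
    fun p hp => Finset.mem_biUnion.mpr ⟨uf p, Finset.mem_univ _, (hχ p hp).1⟩
  have hχnot : ∀ p ∈ Q, χ p ∉ Bodd := by
    intro p hp hmem
    obtain ⟨i, hi, hxi⟩ := Finset.mem_biUnion.mp hmem
    have hi' := Finset.mem_range.mp hi
    have hq := hQmem p hp
    exact no_three' hnt hφ (a := uf p) (b := vf p) (c := ψ i)
      (by rw [hufv p hp, hvfv p hp]; omega)
      (by rw [hufv p hp, hψv i hi']; omega)
      (by rw [hvfv p hp, hψv i hi']; omega)
      (hχ p hp).1 (hχ p hp).2 hxi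
  have hχinj : Set.InjOn χ Q := by
    intro p hp q hq hpq
    by_contra hne
    have hp' : p ∈ Q := Finset.mem_coe.mp hp
    have hq' : q ∈ Q := Finset.mem_coe.mp hq
    have hbp := hQmem p hp'
    have hbq := hQmem q hq'
    have h1 := (hχ p hp').1
    have h2 := (hχ p hp').2
    have h3 := (hχ q hq').1
    have h4 := (hχ q hq').2
    rw [hpq] at h1 h2
    have hne1 : p.1 ≠ q.1 ∨ p.2 ≠ q.2 := by
      by_contra h
      push_neg at h
      exact hne (Prod.ext h.1 h.2)
    rcases hne1 with h | h
    · exact no_three' hnt hφ (a := uf p) (b := uf q) (c := vf p)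
        (by rw [hufv p hp', hufv q hq']; omega)
        (by rw [hufv p hp', hvfv p hp']; omega)
        (by rw [hufv q hq', hvfv p hp']; omega)
        h1 h3 h2
    · exact no_three' hnt hφ (a := uf p) (b := vf p) (c := vf q)
        (by rw [hufv p hp', hvfv p hp']; omega)
        (by rw [hufv p hp', hvfv q hq']; omega)
        (by rw [hvfv p hp', hvfv q hq']; omega)
        h1 h2 h4
  have himg : Q.image χ ⊆ N \ Bodd := by
    intro x hx
    obtain ⟨p, hp, rfl⟩ := Finset.mem_image.mp hx
    exact Finset.mem_sdiff.mpr ⟨hχN p hp, hχnot p hp⟩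
  have hQcard : (Q.image χ).card = t*t - 1 := by
    rw [Finset.card_image_of_injOn hχinj, hQd,
      Finset.card_erase_of_mem (by
        rw [Finset.mem_product]
        exact ⟨Finset.mem_range.mpr (by omega), Finset.mem_range.mpr (by omega)⟩),
      Finset.card_product, Finset.card_range]
  have hBN : Bodd ⊆ N := by
    intro x hx
    obtain ⟨i, hi, hxi⟩ := Finset.mem_biUnion.mp hx
    exact Finset.mem_biUnion.mpr ⟨ψ i, Finset.mem_univ _, hxi⟩
  have hdisj : Disjoint Bodd (Q.image χ) := by
    rw [Finset.disjoint_right]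
    intro x hx
    exact (Finset.mem_sdiff.mp (himg hx)).2
  have h2 := Finset.card_le_card
    (Finset.union_subset hBN (fun x hx => (Finset.mem_sdiff.mp (himg hx)).1))
  rw [Finset.card_union_of_disjoint hdisj, hQcard] at h2
  -- final arithmetic
  have htt : 4 ≤ t*t := Nat.mul_le_mul ht ht
  rw [hm']
  have hn' : (n:ℤ) = 4*(t:ℤ)+2 := by rw [hnt]; push_cast; ring
  rw [hn']
  have hsq : (4*(t:ℤ)+2)^2 = 16*((t*t : ℕ):ℤ) + 16*(t:ℤ) + 4 := by push_cast; ring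
  rw [hsq]
  omega
end
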